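/- arXiv:0807.4116 — 2 statements merged into one kernel-verified Lean document; each statement's English description precedes it below -/
import Mathlib

section
/- Let $m = 2$, $\lambda \in P^+_\sigma$, $a \in \mathbb{C}^\times$. Then the fiber of the folding map over $\boldsymbol\pi^\sigma_{\lambda,a}$ is exactly $\mathbf{r}^{-1}(\boldsymbol\pi^\sigma_{\lambda,a}) = \{ \boldsymbol\pi_{\lambda+\eta, a} \boldsymbol\pi_{-\sigma(\eta), -a} : \eta \in (P^+ - \lambda) \cap P^- \}$. -/
open Polynomial

noncomputable section

variable {I I₀ : Type*}

/-- The weight of 𝛑 ∈ 𝒫 at the spectral parameter `a`. -/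
def wtAt (f : I → Polynomial ℂ) (a : ℂ) : I → ℕ := fun i => (f i).rootMultiplicity a⁻¹

/-- 𝛑_{λ,a} = ((1 - a u)^{λ(hᵢ)})ᵢ ∈ 𝒫, for a dominant weight λ. -/
def piLam (lam : I → ℕ) (a : ℂ) : I → Polynomial ℂ := fun i => (1 - C a * X) ^ lam i

/-- 𝛑_{λ,a} for a weight λ given in integer coordinates (dominance is imposed as a
hypothesis where relevant). -/
def piLamZ (v : I → ℤ) (a : ℂ) : I → Polynomial ℂ := fun i => (1 - C a * X) ^ (v i).toNat

/-- The action of the diagram automorphism σ on weights, σ(Σ nᵢ ωᵢ) = Σ nᵢ ω_{σ(i)},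
i.e. (σ·v)(j) = v(σ⁻¹ j). -/
def sw (σ : Equiv.Perm I) (v : I → ℤ) : I → ℤ := fun i => v (σ.symm i)

/-- The embedding P⁺_σ ⊆ P⁺: a dominant weight of 𝔤₀, given by its coordinates on
the orbit representatives ι : I₀ → I, regarded as a dominant weight of 𝔤 (zero on
the remaining nodes). -/
def embwt (ι : I₀ → I) (lam : I₀ → ℕ) : I → ℤ :=
  Function.extend ι (fun j => (lam j : ℤ)) (fun _ => 0)

open scoped Classical in
/-- The folded components λ(ε) ∈ P⁺_σ of a dominant weight λ ∈ P⁺. -/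
def lamComp (σ : Equiv.Perm I) (ι : I₀ → I) (lam : I → ℕ) (ε : ℕ) : I₀ → ℕ :=
  fun j => if ε ≠ 0 ∧ σ (ι j) = ι j then 0 else lam ((σ ^ ε) (ι j))

open scoped Classical in
/-- The folding map 𝐫 : 𝒫 → 𝒫^σ, 𝐫(∏ₖ 𝛑_{λₖ,aₖ}) = ∏ₖ∏_ε 𝛑^σ_{λₖ(ε), ζ^ε aₖ}; at a
node fixed by σ the spectral parameter is raised to the m-th power. -/
def fold [Fintype I] (m : ℕ) (ζ : ℂ) (σ : Equiv.Perm I) (ι : I₀ → I)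
    (f : I → Polynomial ℂ) : I₀ → Polynomial ℂ :=
  fun j =>
    ∏ a ∈ ((∏ i, f i).roots.toFinset.image fun r => r⁻¹),
      ∏ ε ∈ Finset.range m,
        (1 - C ((ζ ^ ε * a) ^ (if σ (ι j) = ι j then m else 1)) * X) ^
          lamComp σ ι (wtAt f a) ε j

open scoped Classical in
/-- 𝛑^σ_{κ,b} ∈ 𝒫^σ for κ ∈ P⁺_σ: the component at the node j is
(1 - b^{(α_j,α_j)} u)^{κ(j)}, with (α_j,α_j) = m at nodes fixed by σ and 1 on
full orbits. -/
def piSig (m : ℕ) (σ : Equiv.Perm I) (ι : I₀ → I) (κ : I₀ → ℕ) (b : ℂ) :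
    I₀ → Polynomial ℂ :=
  fun j => (1 - C (b ^ (if σ (ι j) = ι j then m else 1)) * X) ^ κ j

/-- The spectral character χ_𝛑 : ℂˣ → P/Q of 𝛑 ∈ 𝒫. -/
def chars (Q : AddSubgroup (I → ℤ)) (f : I → Polynomial ℂ) :
    ℂ → (I → ℤ) ⧸ Q :=
  fun a => QuotientAddGroup.mk (fun i => ((f i).rootMultiplicity a⁻¹ : ℤ))


/-!
Polynomials with constant term `1` over `ℂ` are determined by their root multiplicities, so
everything is a statement about the weights `ν c i = wtAt f c i`. For `m = 2`, `ζ = -1`, the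
weight of `𝐫(f)` at the node `ι j` and parameter `c` (or `c ^ 2` at a σ-fixed node) is the
folded weight `ν c (ι j) + ν (-c) (σ (ι j))`. Since each σ-orbit meets the range of `ι` and the
folded weight at `(σ i, c)` equals the one at `(i, -c)`, `𝐫(f) = 𝛑^σ_{λ,a}` says exactly that
`f` has the folded weights of `𝛑_{λ,a}`. These force `ν c = 0` for `c ≠ ±a` and
`ν a i + ν (-a) (σ i) = λ i`, which is the factorization with `η i = -ν (-a) (σ i)`.
-/

namespace Polynomial

variable {k : Type*} [Field k]

lemma ne_zero_of_coeff_zero_eq_one {p : k[X]} (hp : p.coeff 0 = 1) : p ≠ 0 := by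
  rintro rfl
  simp at hp

lemma one_sub_C_mul_X_pow_ne_zero (c : k) (n : ℕ) : (1 - C c * X) ^ n ≠ 0 :=
  pow_ne_zero _ (ne_zero_of_coeff_zero_eq_one (by simp))

lemma rootMultiplicity_zero_of_coeff_zero_eq_one {p : k[X]} (hp : p.coeff 0 = 1) :
    p.rootMultiplicity 0 = 0 :=
  rootMultiplicity_eq_zero (by simp [IsRoot, ← coeff_zero_eq_eval_zero, hp])

lemma rootMultiplicity_inv_one_sub_C_mul_X_pow [DecidableEq k] {c : k} (hc : c ≠ 0) (n : ℕ)
    (x : k) : ((1 - C c * X) ^ n).rootMultiplicity x⁻¹ = if x = c then n else 0 := by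
  have hfac : 1 - C c * X = C (-c) * (X - C c⁻¹) := by
    rw [mul_sub, ← C_mul, neg_mul, mul_inv_cancel₀ hc, map_neg, map_neg, C_1]
    ring
  rw [← count_roots, roots_pow, hfac, roots_C_mul _ (neg_ne_zero.mpr hc), roots_X_sub_C,
    Multiset.count_nsmul, Multiset.count_singleton]
  simp [inv_inj]

lemma rootMultiplicity_inv_one_sub_C_mul_X_pow_mul_neg [DecidableEq k] {c : k} (hc : c ≠ 0)
    (m n : ℕ) (x : k) : ((1 - C c * X) ^ m * (1 - C (-c) * X) ^ n).rootMultiplicity x⁻¹ =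
      (if x = c then m else 0) + (if x = -c then n else 0) := by
  rw [rootMultiplicity_mul (mul_ne_zero (one_sub_C_mul_X_pow_ne_zero _ _)
    (one_sub_C_mul_X_pow_ne_zero _ _)), rootMultiplicity_inv_one_sub_C_mul_X_pow hc,
    rootMultiplicity_inv_one_sub_C_mul_X_pow (neg_ne_zero.mpr hc)]

lemma rootMultiplicity_finset_prod {ι : Type*} {s : Finset ι} {p : ι → k[X]}
    (hp : ∀ i ∈ s, p i ≠ 0) (x : k) :
    (∏ i ∈ s, p i).rootMultiplicity x = ∑ i ∈ s, (p i).rootMultiplicity x := by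
  classical
  rw [← count_roots, roots_prod _ _ (Finset.prod_ne_zero_iff.mpr hp), Multiset.count_bind]
  simp only [count_roots]
  rfl

lemma eq_of_coeff_zero_eq_one_of_roots_eq [IsAlgClosed k] {p q : k[X]} (hp : p.coeff 0 = 1)
    (hq : q.coeff 0 = 1) (h : p.roots = q.roots) : p = q := by
  obtain ⟨u, hu⟩ := (IsAlgClosed.associated_iff_roots_eq_roots
    (ne_zero_of_coeff_zero_eq_one hp) (ne_zero_of_coeff_zero_eq_one hq)).mpr h
  obtain ⟨r, -, hr⟩ := isUnit_iff.mp u.isUnit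
  have hr1 : r = 1 := by simpa [← hr, mul_coeff_zero, hp, hq] using congrArg (coeff · 0) hu
  rwa [← hr, hr1, C_1, mul_one] at hu

lemma eq_of_rootMultiplicity_inv_eq [IsAlgClosed k] {p q : k[X]} (hp : p.coeff 0 = 1)
    (hq : q.coeff 0 = 1) (h : ∀ x, p.rootMultiplicity x⁻¹ = q.rootMultiplicity x⁻¹) :
    p = q := by
  classical
  refine eq_of_coeff_zero_eq_one_of_roots_eq hp hq (Multiset.ext.mpr fun x => ?_)
  simpa only [count_roots, inv_inv] using h x⁻¹

end Polynomial

section Weights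

variable {f : I → ℂ[X]}

lemma wtAt_zero (hf : ∀ i, (f i).coeff 0 = 1) (i : I) : wtAt f 0 i = 0 := by
  rw [wtAt, inv_zero, rootMultiplicity_zero_of_coeff_zero_eq_one (hf i)]

lemma eq_iff_wtAt_eq {g : I → ℂ[X]} (hf : ∀ i, (f i).coeff 0 = 1)
    (hg : ∀ i, (g i).coeff 0 = 1) : f = g ↔ wtAt f = wtAt g := by
  refine ⟨fun h => h ▸ rfl, fun h => funext fun i => ?_⟩
  exact eq_of_rootMultiplicity_inv_eq (hf i) (hg i) fun x => congrFun (congrFun h x) i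

variable [Fintype I]

/-- The index set of the outer product in `fold`. -/
def wtSupport (f : I → ℂ[X]) : Finset ℂ := (∏ i, f i).roots.toFinset.image fun r => r⁻¹

lemma mem_wtSupport_of_wtAt_ne_zero (hf : ∀ i, (f i).coeff 0 = 1) {b : ℂ} {i : I}
    (h : wtAt f b i ≠ 0) : b ∈ wtSupport f := by
  have hfi := ne_zero_of_coeff_zero_eq_one (hf i)
  have hprod : ∏ i, f i ≠ 0 :=
    Finset.prod_ne_zero_iff.mpr fun i _ => ne_zero_of_coeff_zero_eq_one (hf i)
  have hroot : b⁻¹ ∈ (∏ i, f i).roots := by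
    rw [roots_prod _ _ hprod]
    exact Multiset.mem_bind.mpr ⟨i, Finset.mem_univ i,
      mem_roots'.mpr ⟨hfi, (rootMultiplicity_pos hfi).mp (Nat.pos_of_ne_zero h)⟩⟩
  exact Finset.mem_image.mpr ⟨b⁻¹, Multiset.mem_toFinset.mpr hroot, inv_inv b⟩

lemma zero_notMem_wtSupport (hf : ∀ i, (f i).coeff 0 = 1) : (0 : ℂ) ∉ wtSupport f := by
  intro h
  obtain ⟨r, hr, hr0⟩ := Finset.mem_image.mp h
  rw [inv_eq_zero] at hr0
  subst hr0
  have hroot := (mem_roots'.mp (Multiset.mem_toFinset.mp hr)).2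
  simp [IsRoot, eval_prod, ← coeff_zero_eq_eval_zero, hf] at hroot

lemma sum_ite_eq_wtAt (hf : ∀ i, (f i).coeff 0 = 1) (c : ℂ) (i : I) :
    ∑ b ∈ wtSupport f, (if c = b then wtAt f b i else 0) = wtAt f c i := by
  rw [Finset.sum_ite_eq]
  split_ifs with hc
  · rfl
  · exact (not_imp_comm.mp (mem_wtSupport_of_wtAt_ne_zero hf) hc).symm

end Weights

section Fold

variable [Fintype I] {f : I → ℂ[X]} {σ : Equiv.Perm I} {ι : I₀ → I} {j : I₀}

lemma coeff_zero_fold (m : ℕ) (ζ : ℂ) (σ : Equiv.Perm I) (ι : I₀ → I) (f : I → ℂ[X])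
    (j : I₀) : (fold m ζ σ ι f j).coeff 0 = 1 := by
  simp [fold, coeff_zero_eq_eval_zero, eval_prod]

lemma fold_two_apply_of_fixed (hj : σ (ι j) = ι j) :
    fold 2 (-1) σ ι f j = ∏ b ∈ wtSupport f, (1 - C (b ^ 2) * X) ^ wtAt f b (ι j) := by
  simp [fold, wtSupport, lamComp, hj]

lemma fold_two_apply_of_not_fixed (hj : σ (ι j) ≠ ι j) :
    fold 2 (-1) σ ι f j = ∏ b ∈ wtSupport f,
      (1 - C b * X) ^ wtAt f b (ι j) * (1 - C (-b) * X) ^ wtAt f b (σ (ι j)) := by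
  simp [fold, wtSupport, lamComp, hj, Finset.prod_range_succ]

lemma wtAt_fold_two_sq_of_fixed (hf : ∀ i, (f i).coeff 0 = 1) (hj : σ (ι j) = ι j) (c : ℂ) :
    wtAt (fold 2 (-1) σ ι f) (c ^ 2) j = wtAt f c (ι j) + wtAt f (-c) (ι j) := by
  rcases eq_or_ne c 0 with rfl | hc
  · rw [wtAt, zero_pow two_ne_zero, inv_zero, neg_zero, wtAt_zero hf,
      rootMultiplicity_zero_of_coeff_zero_eq_one (coeff_zero_fold _ _ _ _ _ _)]
  have hterm : ∀ b ∈ wtSupport f,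
      ((1 - C (b ^ 2) * X) ^ wtAt f b (ι j)).rootMultiplicity (c ^ 2)⁻¹ =
        (if c = b then wtAt f b (ι j) else 0) + (if -c = b then wtAt f b (ι j) else 0) := by
    intro b hb
    have hb0 : b ≠ 0 := ne_of_mem_of_not_mem hb (zero_notMem_wtSupport hf)
    have hcc : c ≠ -c := fun h => hc (CharZero.eq_neg_self_iff.mp h)
    have hroots : c ^ 2 = b ^ 2 ↔ c = b ∨ -c = b := by
      rw [sq_eq_sq_iff_eq_or_eq_neg, neg_eq_iff_eq_neg]
    rw [rootMultiplicity_inv_one_sub_C_mul_X_pow (pow_ne_zero 2 hb0)]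
    simp only [hroots]
    split_ifs <;> simp_all
  rw [wtAt, fold_two_apply_of_fixed hj, rootMultiplicity_finset_prod
    fun b _ => one_sub_C_mul_X_pow_ne_zero _ _,
    Finset.sum_congr rfl hterm, Finset.sum_add_distrib, sum_ite_eq_wtAt hf, sum_ite_eq_wtAt hf]

lemma wtAt_fold_two_of_not_fixed (hf : ∀ i, (f i).coeff 0 = 1) (hj : σ (ι j) ≠ ι j) (c : ℂ) :
    wtAt (fold 2 (-1) σ ι f) c j = wtAt f c (ι j) + wtAt f (-c) (σ (ι j)) := by
  have hterm : ∀ b ∈ wtSupport f,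
      ((1 - C b * X) ^ wtAt f b (ι j) * (1 - C (-b) * X) ^ wtAt f b (σ (ι j))).rootMultiplicity
        c⁻¹ =
        (if c = b then wtAt f b (ι j) else 0) + (if -c = b then wtAt f b (σ (ι j)) else 0) := by
    intro b hb
    have hb0 : b ≠ 0 := ne_of_mem_of_not_mem hb (zero_notMem_wtSupport hf)
    rw [rootMultiplicity_inv_one_sub_C_mul_X_pow_mul_neg hb0]
    simp only [neg_eq_iff_eq_neg]
  rw [wtAt, fold_two_apply_of_not_fixed hj,
    rootMultiplicity_finset_prod fun b _ =>
      mul_ne_zero (one_sub_C_mul_X_pow_ne_zero _ _) (one_sub_C_mul_X_pow_ne_zero _ _),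
    Finset.sum_congr rfl hterm, Finset.sum_add_distrib, sum_ite_eq_wtAt hf, sum_ite_eq_wtAt hf]

end Fold

section Generators

variable {σ : Equiv.Perm I} {ι : I₀ → I} {lam : I₀ → ℕ} {a : ℂ}

open scoped Classical in
lemma wtAt_piSig {m : ℕ} {κ : I₀ → ℕ} (ha : a ≠ 0) (x : ℂ) (j : I₀) :
    wtAt (piSig m σ ι κ a) x j = if x = a ^ (if σ (ι j) = ι j then m else 1) then κ j else 0 :=
  rootMultiplicity_inv_one_sub_C_mul_X_pow (pow_ne_zero _ ha) _ _

lemma coeff_zero_piSig (m : ℕ) (σ : Equiv.Perm I) (ι : I₀ → I) (κ : I₀ → ℕ) (a : ℂ) (j : I₀) :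
    (piSig m σ ι κ a j).coeff 0 = 1 := by
  simp [piSig, coeff_zero_eq_eval_zero]

lemma wtAt_piLamZ_mul_piLamZ_neg (ha : a ≠ 0) (v w : I → ℤ) (c : ℂ) (i : I) :
    wtAt (piLamZ v a * piLamZ w (-a)) c i =
      (if c = a then (v i).toNat else 0) + (if c = -a then (w i).toNat else 0) := by
  rw [wtAt, Pi.mul_apply, piLamZ, piLamZ, rootMultiplicity_inv_one_sub_C_mul_X_pow_mul_neg ha]

lemma coeff_zero_piLamZ_mul_piLamZ (v w : I → ℤ) (a b : ℂ) (i : I) :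
    ((piLamZ v a * piLamZ w b) i).coeff 0 = 1 := by
  simp [piLamZ, coeff_zero_eq_eval_zero]

lemma embwt_apply_of_injective (hinj : Function.Injective ι) (j : I₀) :
    embwt ι lam (ι j) = lam j :=
  hinj.extend_apply _ _ j

lemma embwt_apply_of_not_fixed (hsep : ∀ j j' : I₀, σ (ι j) = ι j' → ι j = ι j') {j : I₀}
    (hj : σ (ι j) ≠ ι j) : embwt ι lam (σ (ι j)) = 0 := by
  refine Function.extend_apply' _ _ _ fun ⟨j', hj'⟩ => hj ?_
  rw [← hj', hsep j j' hj'.symm]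

end Generators

section Fiber

variable {σ : Equiv.Perm I} {ι : I₀ → I} {f : I → ℂ[X]} {a : ℂ}

def foldedWt (σ : Equiv.Perm I) (f : I → ℂ[X]) (c : ℂ) (i : I) : ℤ :=
  wtAt f c i + wtAt f (-c) (σ i)

/-- `foldedWt σ (piLamZ κ a)` when `0 ≤ κ` and `a ≠ 0`. -/
def foldedWtPi (σ : Equiv.Perm I) (κ : I → ℤ) (a c : ℂ) (i : I) : ℤ :=
  if c = a then κ i else if c = -a then κ (σ i) else 0

lemma foldedWt_eq_iff_of_forall_range (hσ : σ * σ = 1)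
    (horb : ∀ i : I, ∃ j : I₀, i = ι j ∨ i = σ (ι j)) (ha : a ≠ 0) (κ : I → ℤ) :
    foldedWt σ f = foldedWtPi σ κ a ↔ ∀ j c, foldedWt σ f c (ι j) = foldedWtPi σ κ a c (ι j) := by
  have hσσ : ∀ i, σ (σ i) = i := fun i => congrFun (congrArg DFunLike.coe hσ) i
  have hF : ∀ c i, foldedWt σ f c (σ i) = foldedWt σ f (-c) i := fun c i => by
    rw [foldedWt, foldedWt, hσσ, neg_neg, add_comm]
  have hG : ∀ c i, foldedWtPi σ κ a c (σ i) = foldedWtPi σ κ a (-c) i := fun c i => by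
    have hna : a ≠ -a := fun h => ha (CharZero.eq_neg_self_iff.mp h)
    simp only [foldedWtPi, hσσ, neg_eq_iff_eq_neg]
    split_ifs <;> simp_all
  refine ⟨fun h j c => by rw [h], fun h => funext fun c => funext fun i => ?_⟩
  obtain ⟨j, rfl | rfl⟩ := horb i
  · exact h j c
  · rw [hF, hG, h]

lemma foldedWt_eq_iff_exists_eq_piLamZ_mul [Fintype I] (hσ : σ * σ = 1) (ha : a ≠ 0)
    (hf : ∀ i, (f i).coeff 0 = 1) (κ : I → ℤ) :
    foldedWt σ f = foldedWtPi σ κ a ↔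
      ∃ η : I → ℤ, (∀ i, 0 ≤ κ i + η i) ∧ (∀ i, η i ≤ 0) ∧
        f = piLamZ (fun i => κ i + η i) a * piLamZ (fun i => -(sw σ η i)) (-a) := by
  have hna : a ≠ -a := fun h => ha (CharZero.eq_neg_self_iff.mp h)
  have hσσ : ∀ i, σ (σ i) = i := fun i => congrFun (congrArg DFunLike.coe hσ) i
  have hsymm : ∀ i, σ.symm i = σ i := fun i => σ.symm_apply_eq.mpr (hσσ i).symm
  constructor
  · intro h
    have hwt : ∀ c i, (wtAt f c i : ℤ) + wtAt f (-c) (σ i) = foldedWtPi σ κ a c i :=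
      fun c i => congrFun (congrFun h c) i
    have hκ : ∀ i, (wtAt f a i : ℤ) + wtAt f (-a) (σ i) = κ i := fun i => by
      simpa [foldedWtPi] using hwt a i
    refine ⟨fun i => -(wtAt f (-a) (σ i) : ℤ), fun i => by linarith [hκ i], fun i => by simp, ?_⟩
    rw [eq_iff_wtAt_eq hf (coeff_zero_piLamZ_mul_piLamZ _ _ _ _)]
    funext c i
    rw [wtAt_piLamZ_mul_piLamZ_neg ha]
    simp only [sw, Equiv.apply_symm_apply, neg_neg, Int.toNat_natCast]
    by_cases hca : c = a
    · subst hca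
      rw [if_pos rfl, if_neg hna]
      have := hκ i
      omega
    by_cases hcna : c = -a
    · subst hcna
      rw [if_neg hca, if_pos rfl, zero_add]
    · have := hwt c i
      rw [foldedWtPi, if_neg hca, if_neg hcna] at this
      rw [if_neg hca, if_neg hcna]
      omega
  · rintro ⟨η, hpos, hneg, rfl⟩
    funext c i
    simp only [foldedWt, foldedWtPi, wtAt_piLamZ_mul_piLamZ_neg ha, sw, hsymm, hσσ,
      neg_eq_iff_eq_neg, neg_neg]
    split_ifs <;> simp_all

lemma fold_eq_piSig_iff_foldedWt_eq [Fintype I] (hσ : σ * σ = 1) (hinj : Function.Injective ι)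
    (horb : ∀ i : I, ∃ j : I₀, i = ι j ∨ i = σ (ι j))
    (hsep : ∀ j j' : I₀, σ (ι j) = ι j' → ι j = ι j') (ha : a ≠ 0)
    (hf : ∀ i, (f i).coeff 0 = 1) (lam : I₀ → ℕ) :
    fold 2 (-1) σ ι f = piSig 2 σ ι lam a ↔ foldedWt σ f = foldedWtPi σ (embwt ι lam) a := by
  have hnode : ∀ j, (∀ x, wtAt (fold 2 (-1) σ ι f) x j = wtAt (piSig 2 σ ι lam a) x j) ↔
      ∀ c, foldedWt σ f c (ι j) = foldedWtPi σ (embwt ι lam) a c (ι j) := by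
    intro j
    by_cases hj : σ (ι j) = ι j
    · have hsq : Function.Surjective fun c : ℂ => c ^ 2 :=
        fun x => IsAlgClosed.exists_pow_nat_eq x two_pos
      rw [hsq.forall]
      refine forall_congr' fun c => ?_
      rw [wtAt_fold_two_sq_of_fixed hf hj, wtAt_piSig ha, if_pos hj, foldedWt, foldedWtPi, hj,
        embwt_apply_of_injective hinj]
      simp only [sq_eq_sq_iff_eq_or_eq_neg]
      split_ifs <;> simp_all <;> omega
    · refine forall_congr' fun c => ?_
      rw [wtAt_fold_two_of_not_fixed hf hj, wtAt_piSig ha, if_neg hj, pow_one, foldedWt,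
        foldedWtPi, embwt_apply_of_injective hinj, embwt_apply_of_not_fixed hsep hj]
      split_ifs <;> omega
  rw [eq_iff_wtAt_eq (coeff_zero_fold _ _ _ _ _) (coeff_zero_piSig _ _ _ _ _),
    foldedWt_eq_iff_of_forall_range hσ horb ha]
  simp only [funext_iff]
  rw [forall_comm]
  exact forall_congr' hnode

end Fiber

/-- for m = 2, λ ∈ P⁺_σ and a ∈ ℂˣ, the fiber of the folding map over
𝛑^σ_{λ,a} is exactly
𝐫⁻¹(𝛑^σ_{λ,a}) = { 𝛑_{λ+η,a} 𝛑_{-σ(η),-a} : η ∈ (P⁺ - λ) ∩ P⁻ }. -/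
theorem stmt8 {I I₀ : Type*} [Fintype I]
    (σ : Equiv.Perm I) (hσ : σ * σ = 1)
    (ι : I₀ → I) (hinj : Function.Injective ι)
    (horb : ∀ i : I, ∃ j : I₀, i = ι j ∨ i = σ (ι j))
    (hsep : ∀ j j' : I₀, σ (ι j) = ι j' → ι j = ι j')
    (a : ℂ) (ha : a ≠ 0) (lam : I₀ → ℕ) :
    ∀ f : I → Polynomial ℂ, (∀ i, (f i).coeff 0 = 1) →
      (fold 2 (-1 : ℂ) σ ι f = piSig 2 σ ι lam a ↔
        ∃ η : I → ℤ,
          (∀ i, 0 ≤ embwt ι lam i + η i) ∧ (∀ i, η i ≤ 0) ∧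
          f = piLamZ (fun i => embwt ι lam i + η i) a *
              piLamZ (fun i => -(sw σ η i)) (-a)) := by
  intro f hf
  rw [fold_eq_piSig_iff_foldedWt_eq hσ hinj horb hsep ha hf,
    foldedWt_eq_iff_exists_eq_piLamZ_mul hσ ha hf]
end
end

section
/- Let $m = 3$ (type $D_4$), $\lambda, \mu, \gamma \in P^+_\sigma$, and $\eta, \nu \in P$ satisfying $\eta + \nu \in P^+ - \lambda$, $\sigma^2(\eta) \in P^- + \mu$, $\sigma(\nu) \in P^- + \gamma$. Then $\mathbf{r}(\boldsymbol\pi_{\lambda+\eta+\nu, a}\, \boldsymbol\pi_{\mu - \sigma^2(\eta), \zeta a}\, \boldsymbol\pi_{\gamma - \sigma(\nu), \zeta^2 a}) = \boldsymbol\pi^\sigma_{\lambda, a}\, \boldsymbol\pi^\sigma_{\mu, \zeta a}\, \boldsymbol\pi^\sigma_{\gamma, \zeta^2 a}$. -/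
open Polynomial

noncomputable section

variable {I I₀ : Type*}

/-- The embedding of the set I₀ of σ-orbit representatives of the D₄ diagram into
its node set: node 1 (index 0) represents the triality orbit {1,3,4} and node 2
(index 1) is the fixed node. -/
def iotaD4 : Fin 2 → Fin 4 := ![0, 1]

/-!
The spectral parameters `a`, `ζ a`, `ζ² a` are distinct, so `𝐫` is multiplicative on the
product and the result can be read off node by node. At the node on the free orbit, the factor
`1 - ζ^t a u` collects the weights of the `k`-th factor at `σ^(t-k)` of that node; the twists
`σ²(η)` and `σ(ν)` are exactly the ones under which `η` and `ν` cancel in each of these three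
sums, leaving `λ`, `μ`, `γ`. At the fixed node all three parameters fold to `a³`, and `η`, `ν`
cancel in the total.
-/

open scoped Classical in
/-- `foldPiLam m ζ σ ι w b` is `𝐫(𝛑_{w,b}) = ∏_ε 𝛑^σ_{w(ε), ζ^ε b}`. -/
def foldPiLam (m : ℕ) (ζ : ℂ) (σ : Equiv.Perm I) (ι : I₀ → I) (w : I → ℕ) (b : ℂ) :
    I₀ → Polynomial ℂ :=
  fun j => ∏ ε ∈ Finset.range m,
    (1 - C ((ζ ^ ε * b) ^ (if σ (ι j) = ι j then m else 1)) * X) ^ lamComp σ ι w ε j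

theorem lamComp_zero (σ : Equiv.Perm I) (ι : I₀ → I) (ε : ℕ) : lamComp σ ι 0 ε = 0 := by
  funext j
  simp only [lamComp, Pi.zero_apply, ite_self]

theorem foldPiLam_zero (m : ℕ) (ζ : ℂ) (σ : Equiv.Perm I) (ι : I₀ → I) (b : ℂ) :
    foldPiLam m ζ σ ι 0 b = 1 := by
  funext j
  simp only [foldPiLam, lamComp_zero, Pi.zero_apply, pow_zero, Finset.prod_const_one,
    Pi.one_apply]

theorem wtAt_eq_zero_iff [Fintype I] {f : I → ℂ[X]} (hf : ∀ i, f i ≠ 0) (b : ℂ) :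
    wtAt f b = 0 ↔ ¬ (∏ i, f i).IsRoot b⁻¹ := by
  simp only [funext_iff, wtAt, Pi.zero_apply, rootMultiplicity_eq_zero_iff, IsRoot.def,
    eval_prod, Finset.prod_eq_zero_iff, Finset.mem_univ, true_and, not_exists]
  exact forall_congr' fun i => imp_iff_not (hf i)

/-- The inverse roots of `∏ i, f i` over which `fold` ranges are exactly the `b` with
`wtAt f b ≠ 0`. -/
theorem fold_eq_prod_foldPiLam [Fintype I] (m : ℕ) (ζ : ℂ) (σ : Equiv.Perm I) (ι : I₀ → I)
    {f : I → ℂ[X]} (hf : ∀ i, f i ≠ 0) (T : Finset ℂ) (hT : ∀ b ∉ T, wtAt f b = 0) :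
    fold m ζ σ ι f = ∏ b ∈ T, foldPiLam m ζ σ ι (wtAt f b) b := by
  have hprod : ∏ i, f i ≠ 0 := Finset.prod_ne_zero_iff.2 fun i _ => hf i
  funext j
  rw [Finset.prod_apply]
  refine Finset.prod_subset (fun b hb => ?_) (fun b _ hbS => ?_)
  · obtain ⟨r, hr, rfl⟩ := Finset.mem_image.1 hb
    by_contra hbT
    have hroot : (∏ i, f i).IsRoot r⁻¹⁻¹ := by
      rw [inv_inv]; exact (mem_roots hprod).1 (Multiset.mem_toFinset.1 hr)
    exact (wtAt_eq_zero_iff hf _).1 (hT _ hbT) hroot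
  · have hroot : ¬ (∏ i, f i).IsRoot b⁻¹ := fun h => hbS <|
      Finset.mem_image.2 ⟨b⁻¹, Multiset.mem_toFinset.2 ((mem_roots hprod).2 h), inv_inv b⟩
    rw [(wtAt_eq_zero_iff hf b).2 hroot]
    exact congrFun (foldPiLam_zero m ζ σ ι b) j

theorem wtAt_mul {f g : I → ℂ[X]} (hf : ∀ i, f i ≠ 0) (hg : ∀ i, g i ≠ 0) (b : ℂ) :
    wtAt (f * g) b = wtAt f b + wtAt g b := by
  funext i
  exact rootMultiplicity_mul (mul_ne_zero (hf i) (hg i))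

theorem wtAt_prod {κ : Type*} (s : Finset κ) {F : κ → I → ℂ[X]} (hF : ∀ k i, F k i ≠ 0)
    (b : ℂ) : wtAt (∏ k ∈ s, F k) b = ∑ k ∈ s, wtAt (F k) b := by
  classical
  induction s using Finset.induction_on with
  | empty => funext i; simp [wtAt]
  | insert k s hk ih =>
    have hs : ∀ i, (∏ k ∈ s, F k) i ≠ 0 := fun i => by
      rw [Finset.prod_apply]; exact Finset.prod_ne_zero_iff.2 fun k _ => hF k i
    rw [Finset.prod_insert hk, Finset.sum_insert hk, wtAt_mul (hF k) hs, ih]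

theorem one_sub_C_mul_X_ne_zero (c : ℂ) : (1 - C c * X : ℂ[X]) ≠ 0 := by
  intro h; simpa using congrArg (eval 0) h

theorem roots_one_sub_C_mul_X {c : ℂ} (hc : c ≠ 0) : (1 - C c * X : ℂ[X]).roots = {c⁻¹} := by
  have hfac : (1 - C c * X : ℂ[X]) = C (-c) * (X - C c⁻¹) := by
    rw [mul_sub, ← C_mul, neg_mul, mul_inv_cancel₀ hc]; simp only [C_neg, C_1]; ring
  rw [hfac, roots_C_mul _ (neg_ne_zero.2 hc), roots_X_sub_C]

theorem piLam_ne_zero (lam : I → ℕ) (c : ℂ) (i : I) : piLam lam c i ≠ 0 :=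
  pow_ne_zero _ (one_sub_C_mul_X_ne_zero c)

open scoped Classical in
theorem wtAt_piLam (lam : I → ℕ) {c : ℂ} (hc : c ≠ 0) (b : ℂ) :
    wtAt (piLam lam c) b = if b = c then lam else 0 := by
  funext i
  rw [wtAt, piLam, ← count_roots, roots_pow, roots_one_sub_C_mul_X hc, Multiset.count_nsmul,
    Multiset.count_singleton]
  simp only [inv_inj]
  split_ifs <;> simp

theorem wtAt_prod_piLam {κ : Type*} [Fintype κ] {c : κ → ℂ} (hc : Function.Injective c)
    (hc0 : ∀ k, c k ≠ 0) (lam : κ → I → ℕ) (k : κ) :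
    wtAt (∏ k, piLam (lam k) (c k)) (c k) = lam k := by
  classical
  simp only [wtAt_prod _ (fun k => piLam_ne_zero (lam k) (c k)), wtAt_piLam _ (hc0 _),
    hc.eq_iff, Finset.sum_ite_eq, Finset.mem_univ, if_true]

theorem fold_prod_piLam [Fintype I] {κ : Type*} [Fintype κ] (m : ℕ) (ζ : ℂ)
    (σ : Equiv.Perm I) (ι : I₀ → I) {c : κ → ℂ} (hc : Function.Injective c)
    (hc0 : ∀ k, c k ≠ 0) (lam : κ → I → ℕ) :
    fold m ζ σ ι (∏ k, piLam (lam k) (c k)) = ∏ k, foldPiLam m ζ σ ι (lam k) (c k) := by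
  have hne : ∀ i, (∏ k, piLam (lam k) (c k)) i ≠ 0 := fun i => by
    rw [Finset.prod_apply]; exact Finset.prod_ne_zero_iff.2 fun k _ => piLam_ne_zero _ _ i
  have hsupp : ∀ b ∉ Finset.univ.image c, wtAt (∏ k, piLam (lam k) (c k)) b = 0 := by
    intro b hb
    rw [wtAt_prod _ (fun k => piLam_ne_zero (lam k) (c k))]
    refine Finset.sum_eq_zero fun k _ => ?_
    rw [wtAt_piLam _ (hc0 k), if_neg]
    rintro rfl
    exact hb (Finset.mem_image_of_mem c (Finset.mem_univ k))
  rw [fold_eq_prod_foldPiLam m ζ σ ι hne _ hsupp, Finset.prod_image hc.injOn]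
  simp only [wtAt_prod_piLam hc hc0]

theorem piLamZ_mul_piLamZ_mul_piLamZ (v₁ v₂ v₃ : I → ℤ) (ζ a : ℂ) :
    piLamZ v₁ a * piLamZ v₂ (ζ * a) * piLamZ v₃ (ζ ^ 2 * a) =
      ∏ k : Fin 3, piLam (fun i => (![v₁, v₂, v₃] k i).toNat) (ζ ^ (k : ℕ) * a) := by
  simp only [Fin.prod_univ_three, Matrix.cons_val, Fin.val_zero, Fin.val_one, Fin.val_two,
    pow_zero, pow_one, one_mul]
  rfl

theorem IsPrimitiveRoot.injective_pow_mul {ζ : ℂ} {n : ℕ} (hζ : IsPrimitiveRoot ζ n) {a : ℂ}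
    (ha : a ≠ 0) : Function.Injective fun k : Fin n => ζ ^ (k : ℕ) * a :=
  fun i j h => Fin.ext <| hζ.pow_inj i.2 j.2 (mul_right_cancel₀ ha h)

section CubeRoot

variable {ζ : ℂ} (hζ : ζ ^ 3 = 1) (a : ℂ)
include hζ

theorem pow_mul_pow_mul_eq_mod (i k : ℕ) : ζ ^ i * (ζ ^ k * a) = ζ ^ ((i + k) % 3) * a := by
  rw [← mul_assoc, ← pow_add, ← Nat.mod_add_div (i + k) 3, pow_add, pow_mul, hζ, one_pow,
    mul_one, Nat.mod_add_div]

theorem pow_mul_pow_three (k : ℕ) : (ζ ^ k * a) ^ 3 = a ^ 3 := by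
  rw [mul_pow, ← pow_mul, mul_comm k, pow_mul, hζ, one_pow, one_mul]

theorem prod_foldPiLam_apply_of_ne (σ : Equiv.Perm I) (ι : I₀ → I) {j : I₀}
    (hj : σ (ι j) ≠ ι j) (w : Fin 3 → I → ℕ) :
    (∏ k : Fin 3, foldPiLam 3 ζ σ ι (w k) (ζ ^ (k : ℕ) * a)) j =
      (1 - C a * X) ^ (w 0 (ι j) + w 1 (σ (σ (ι j))) + w 2 (σ (ι j))) *
      (1 - C (ζ * a) * X) ^ (w 0 (σ (ι j)) + w 1 (ι j) + w 2 (σ (σ (ι j)))) *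
      (1 - C (ζ ^ 2 * a) * X) ^ (w 0 (σ (σ (ι j))) + w 1 (σ (ι j)) + w 2 (ι j)) := by
  simp only [Finset.prod_apply, foldPiLam, Fin.prod_univ_three, Finset.prod_range_succ,
    Finset.prod_range_zero, lamComp, hj, and_false, if_false, pow_mul_pow_mul_eq_mod hζ,
    Fin.val_zero, Fin.val_one, Fin.val_two, Nat.reduceAdd, Nat.reduceMod, pow_zero, pow_one,
    one_mul, sq, Equiv.Perm.mul_apply, Equiv.Perm.one_apply]
  ring

theorem prod_foldPiLam_apply_of_eq (σ : Equiv.Perm I) (ι : I₀ → I) {j : I₀}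
    (hj : σ (ι j) = ι j) (w : Fin 3 → I → ℕ) :
    (∏ k : Fin 3, foldPiLam 3 ζ σ ι (w k) (ζ ^ (k : ℕ) * a)) j =
      (1 - C (a ^ 3) * X) ^ (w 0 (ι j) + w 1 (ι j) + w 2 (ι j)) := by
  simp only [Finset.prod_apply, foldPiLam, Fin.prod_univ_three, Finset.prod_range_succ,
    Finset.prod_range_zero, lamComp, hj, if_true, pow_mul_pow_mul_eq_mod hζ,
    pow_mul_pow_three hζ, ne_eq, not_true_eq_false, false_and, if_false, one_ne_zero,
    OfNat.ofNat_ne_zero, not_false_eq_true, true_and, pow_zero, Equiv.Perm.one_apply, mul_one,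
    one_mul]
  ring

end CubeRoot

theorem sw_mul (σ τ : Equiv.Perm I) (v : I → ℤ) : sw (σ * τ) v = sw σ (sw τ v) := rfl

theorem sw_apply_of_apply_eq {σ : Equiv.Perm I} {i j : I} (h : σ i = j) (v : I → ℤ) :
    sw σ v j = v i := by
  rw [sw, ← h, Equiv.symm_apply_apply]

theorem embwt_iotaD4 (k : Fin 2 → ℕ) : embwt iotaD4 k = ![(k 0 : ℤ), k 1, 0, 0] := by
  have hinj : Function.Injective iotaD4 := by decide
  funext i
  fin_cases i
  · exact hinj.extend_apply _ _ 0
  · exact hinj.extend_apply _ _ 1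
  · exact Function.extend_apply' _ _ _ (by decide)
  · exact Function.extend_apply' _ _ _ (by decide)

theorem toNat_add_toNat_add_toNat_eq {x y z : ℤ} {n : ℕ} (hx : 0 ≤ x) (hy : 0 ≤ y) (hz : 0 ≤ z)
    (h : x + y + z = n) : x.toNat + y.toNat + z.toNat = n := by
  omega

/-- let m = 3 (type D₄ with triality σ, σ(1) = 3, σ(3) = 4,
σ(4) = 1, σ(2) = 2, in node indices 0-based: σ 0 = 2, σ 2 = 3, σ 3 = 0, σ 1 = 1),
λ, μ, γ ∈ P⁺_σ, and η, ν ∈ P with η + ν ∈ P⁺ - λ, σ²(η) ∈ P⁻ + μ,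
σ(ν) ∈ P⁻ + γ.  Then
𝐫(𝛑_{λ+η+ν,a} 𝛑_{μ-σ²(η),ζa} 𝛑_{γ-σ(ν),ζ²a}) = 𝛑^σ_{λ,a} 𝛑^σ_{μ,ζa} 𝛑^σ_{γ,ζ²a}. -/
theorem stmt17 (σ : Equiv.Perm (Fin 4))
    (hσ0 : σ 0 = 2) (hσ2 : σ 2 = 3) (hσ3 : σ 3 = 0) (hσ1 : σ 1 = 1)
    (ζ a : ℂ) (hζ : IsPrimitiveRoot ζ 3) (ha : a ≠ 0)
    (lam mu gam : Fin 2 → ℕ) (η ν : Fin 4 → ℤ)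
    (h₁ : ∀ i, 0 ≤ embwt iotaD4 lam i + η i + ν i)
    (h₂ : ∀ i, sw (σ ^ 2) η i ≤ embwt iotaD4 mu i)
    (h₃ : ∀ i, sw σ ν i ≤ embwt iotaD4 gam i) :
    fold 3 ζ σ iotaD4
        (piLamZ (fun i => embwt iotaD4 lam i + η i + ν i) a *
          piLamZ (fun i => embwt iotaD4 mu i - sw (σ ^ 2) η i) (ζ * a) *
          piLamZ (fun i => embwt iotaD4 gam i - sw σ ν i) (ζ ^ 2 * a))
      = piSig 3 σ iotaD4 lam a * piSig 3 σ iotaD4 mu (ζ * a) *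
          piSig 3 σ iotaD4 gam (ζ ^ 2 * a) := by
  set v₁ : Fin 4 → ℤ := fun i => embwt iotaD4 lam i + η i + ν i
  set v₂ : Fin 4 → ℤ := fun i => embwt iotaD4 mu i - sw (σ ^ 2) η i
  set v₃ : Fin 4 → ℤ := fun i => embwt iotaD4 gam i - sw σ ν i
  have hv : ∀ i, 0 ≤ v₁ i ∧ 0 ≤ v₂ i ∧ 0 ≤ v₃ i :=
    fun i => ⟨h₁ i, sub_nonneg.2 (h₂ i), sub_nonneg.2 (h₃ i)⟩
  obtain ⟨e₀, e₁, e₂, e₃⟩ : v₁ 0 + v₂ 3 + v₃ 2 = lam 0 ∧ v₁ 2 + v₂ 0 + v₃ 3 = mu 0 ∧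
      v₁ 3 + v₂ 2 + v₃ 0 = gam 0 ∧ v₁ 1 + v₂ 1 + v₃ 1 = lam 1 + mu 1 + gam 1 := by
    simp only [v₁, v₂, v₃, embwt_iotaD4, Matrix.cons_val, sq, sw_mul, sw_apply_of_apply_eq hσ0,
      sw_apply_of_apply_eq hσ1, sw_apply_of_apply_eq hσ2, sw_apply_of_apply_eq hσ3]
    refine ⟨?_, ?_, ?_, ?_⟩ <;> ring
  have hζ3 : ζ ^ 3 = 1 := hζ.pow_eq_one
  rw [piLamZ_mul_piLamZ_mul_piLamZ, fold_prod_piLam 3 ζ σ iotaD4 (hζ.injective_pow_mul ha)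
    (fun k => mul_ne_zero (pow_ne_zero _ (hζ.ne_zero (by norm_num))) ha)]
  refine funext (Fin.forall_fin_two.2 ⟨?_, ?_⟩)
  · have hfix : σ (iotaD4 0) ≠ iotaD4 0 := by simp [iotaD4, hσ0]
    rw [prod_foldPiLam_apply_of_ne hζ3 a σ iotaD4 hfix]
    simp only [piSig, Pi.mul_apply, if_neg hfix, pow_one]
    simp only [show iotaD4 0 = 0 from rfl, hσ0, hσ2, Matrix.cons_val]
    rw [toNat_add_toNat_add_toNat_eq (hv 0).1 (hv 3).2.1 (hv 2).2.2 e₀,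
      toNat_add_toNat_add_toNat_eq (hv 2).1 (hv 0).2.1 (hv 3).2.2 e₁,
      toNat_add_toNat_add_toNat_eq (hv 3).1 (hv 2).2.1 (hv 0).2.2 e₂]
  · have hfix : σ (iotaD4 1) = iotaD4 1 := hσ1
    rw [prod_foldPiLam_apply_of_eq hζ3 a σ iotaD4 hfix]
    simp only [piSig, Pi.mul_apply, if_pos hfix, mul_pow, hζ3, one_mul, pow_mul_pow_three hζ3 a 2]
    simp only [show iotaD4 1 = 1 from rfl, Matrix.cons_val]
    rw [toNat_add_toNat_add_toNat_eq (hv 1).1 (hv 1).2.1 (hv 1).2.2 e₃, pow_add, pow_add]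

end
end
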